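/- Let $Y_d = q(d, U_d)$ for $d\in\{0,1\}$ where each $q(d,\cdot)$ is strictly increasing, and suppose the rank variables satisfy rank similarity given $\eta$: $F_{U_0|\eta}(\cdot|t)=F_{U_1|\eta}(\cdot|t)$ for all $t$. Then for any finite signed measure $G$ on $\mathcal{T}$ and any $c\in\mathbb{R}_+$: $\int_{\mathcal{T}} F_{Y_1|\eta}(y|t)\,dG(t)\le c$ for all $y$ if and only if $\int_{\mathcal{T}} F_{Y_0|\eta}(y|t)\,dG(t)\le c$ for all $y$. -/
import Mathlib

open MeasureTheory

/-- With `Y_d = q(d, U_d)` for strictly increasing `q(d,·)`, so that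
`F_{Y_d|η}(y|t) = F_{U_d|η}(q(d,·)⁻¹(y)|t)`, rank similarity implies the biconditional
mixture inequality for the potential-outcome distributions. Signed measures `G` are
encoded by a pair of finite measures `(Gp, Gm)` with `∫ f dG = ∫ f dGp - ∫ f dGm`. -/
theorem stmt_1 {T : Type*} [MeasurableSpace T]
    (q0 q1 : ℝ → ℝ) (hq0 : StrictMono q0) (hq1 : StrictMono q1)
    (FU0 FU1 FY0 FY1 : T → ℝ → ℝ)
    (hRS : ∀ t : T, FU0 t = FU1 t)
    (hFY0 : ∀ t y, FY0 t y = FU0 t (Function.invFun q0 y))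
    (hFY1 : ∀ t y, FY1 t y = FU1 t (Function.invFun q1 y)) :
    ∀ (Gp Gm : Measure T), IsFiniteMeasure Gp → IsFiniteMeasure Gm →
    ∀ c : ℝ, 0 ≤ c →
      ((∀ y : ℝ, (∫ t, FY1 t y ∂Gp) - (∫ t, FY1 t y ∂Gm) ≤ c) ↔
       (∀ y : ℝ, (∫ t, FY0 t y ∂Gp) - (∫ t, FY0 t y ∂Gm) ≤ c)) := by
  intro Gp Gm _ _ c _
  have h01 : ∀ t y, FY0 t y = FY1 t (q1 (Function.invFun q0 y)) := by
    intro t y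
    rw [hFY0, hFY1, ← hRS, Function.leftInverse_invFun hq1.injective]
  have h10 : ∀ t y, FY1 t y = FY0 t (q0 (Function.invFun q1 y)) := by
    intro t y
    rw [hFY0, hFY1, ← hRS, Function.leftInverse_invFun hq0.injective]
  constructor
  · intro h y
    simp only [h01]
    exact h _
  · intro h y
    simp only [h10]
    exact h _
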